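/- Let A be a Hilbert algebra. Then A is an implication algebra (i.e., satisfies (x → y) → x = x for all x, y) if and only if for every p ∈ A, the fixpoint set of the principal closure endomorphism α_p : x ↦ p → x, namely {x ∈ A : p → x = x}, is a filter of A. -/
import Mathlib


/-- A Hilbert algebra: a set with implication `imp` and constant `one`. -/
class HilbertAlgebra (A : Type*) where
  imp : A → A → A
  one : A
  imp_one : ∀ x y : A, imp x (imp y x) = one
  imp_distrib : ∀ x y z : A,
    imp (imp x (imp y z)) (imp (imp x y) (imp x z)) = one
  imp_antisymm : ∀ x y : A, imp x y = one → imp y x = one → x = y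

namespace HilbertAlgebra

variable {A : Type*} [HilbertAlgebra A]

/-- The natural order of a Hilbert algebra: `x ≤ y` iff `x → y = 1`. -/
def le (x y : A) : Prop := imp x y = one

/-- A filter of a Hilbert algebra. -/
def IsFilter (J : Set A) : Prop :=
  (one : A) ∈ J ∧ ∀ x y : A, x ∈ J → imp x y ∈ J → y ∈ J

section Aux

variable (hOne : ∀ p : A, imp p one = one)
include hOne

/-- Modus ponens, assuming `p → 1 = 1`. -/
lemma aux_mp {t q : A} (ht : t = one) (htq : imp t q = one) : q = one := by
  subst ht
  exact imp_antisymm q one (hOne q) htq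

lemma aux_refl (x : A) : imp x x = one := by
  have h1 : imp (imp x (imp x x)) (imp x x) = one :=
    aux_mp hOne (imp_one x (imp x x)) (imp_distrib x (imp x x) x)
  exact aux_mp hOne (imp_one x x) h1

lemma aux_one_imp (x : A) : imp one x = x := by
  refine imp_antisymm _ _ ?_ (imp_one x one)
  have h1 : imp (imp (imp one x) one) (imp (imp one x) x) = one :=
    aux_mp hOne (aux_refl hOne (imp one x))
      (imp_distrib (imp one x) one x)
  exact aux_mp hOne (hOne (imp one x)) h1

lemma aux_trans {x y z : A} (hxy : imp x y = one) (hyz : imp y z = one) :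
    imp x z = one := by
  have hS := imp_distrib x y z
  rw [hyz, hOne x, aux_one_imp hOne, hxy, aux_one_imp hOne] at hS
  exact hS

lemma aux_antitone {a b : A} (hab : imp a b = one) (c : A) :
    imp (imp b c) (imp a c) = one := by
  have h1 : imp (imp b c) (imp (imp a b) (imp a c)) = one :=
    aux_trans hOne (imp_one (imp b c) a) (imp_distrib a b c)
  rw [hab, aux_one_imp hOne] at h1
  exact h1

lemma aux_exch_le (x y z : A) :
    imp (imp x (imp y z)) (imp y (imp x z)) = one :=
  aux_trans hOne (imp_distrib x y z)
    (aux_antitone hOne (imp_one y x) (imp x z))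

lemma aux_exch (x y z : A) : imp x (imp y z) = imp y (imp x z) :=
  imp_antisymm _ _ (aux_exch_le hOne x y z) (aux_exch_le hOne y x z)

lemma aux_pp (p z : A) : imp p (imp p z) = imp p z := by
  refine imp_antisymm _ _ ?_ (imp_one (imp p z) p)
  have hS := imp_distrib p p z
  rw [aux_refl hOne p, aux_one_imp hOne] at hS
  exact hS

end Aux

/-- A Hilbert algebra is an implication algebra iff the fixpoint set of every
principal closure endomorphism `α_p : x ↦ p → x` is a filter. -/
theorem implicationAlgebra_iff_principal_fixpoints_filter :
    (∀ x y : A, imp (imp x y) x = x) ↔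
      (∀ p : A, IsFilter {x : A | imp p x = x}) := by
  constructor
  · intro hC p
    -- contraction gives 1 → z = z
    have hOneImp : ∀ z : A, imp one z = z := by
      intro z
      have := hC z (imp z z)
      rwa [imp_one z z] at this
    have hOne : ∀ q : A, imp q one = one := by
      intro q
      have := imp_one (one : A) q
      rwa [hOneImp (imp q one)] at this
    constructor
    · exact hOne p
    · intro x y hx hxy
      simp only [Set.mem_setOf_eq] at hx hxy ⊢
      set c := imp p y with hc
      refine imp_antisymm _ _ ?_ (imp_one y p)
      -- show c → y = 1
      set w := imp c y with hw
      have hpw : imp p w = one := by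
        rw [hw, aux_exch hOne, ← hc, aux_refl hOne]
      have hxc : imp x c = imp x y := by
        rw [hc, aux_exch hOne, hxy]
      have hxw : imp x w = one := by
        rw [hw, aux_exch hOne, ← hxc]
        exact imp_one c x
      -- w → x ≤ w
      have h1 : imp (imp w x) (imp p x) = one := aux_antitone hOne hpw x
      rw [hx] at h1
      have h2 : imp (imp w x) w = one := aux_trans hOne h1 hxw
      have := hC w x
      rw [h2] at this
      rw [← this]
  · intro hF
    have hOne : ∀ q : A, imp q one = one := fun q => (hF q).1
    intro a b
    set q := imp (imp a b) a with hq
    have haq : imp a q = one := imp_one a (imp a b)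
    refine imp_antisymm _ _ ?_ haq
    -- show q → a = 1 using the filter at a
    have hx : imp a (imp a b) = imp a b := aux_pp hOne a b
    have hxy : imp (imp a b) (imp q a) = one := by
      rw [aux_exch hOne, ← hq, aux_refl hOne]
    have h1 : imp a (imp (imp a b) (imp q a)) = imp (imp a b) (imp q a) := by
      rw [hxy, hOne a]
    have h2 : imp a (imp q a) = imp q a :=
      (hF a).2 (imp a b) (imp q a) hx h1
    rw [← h2, imp_one a q]

end HilbertAlgebra
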